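/- For the Heisenberg group action α_{(r,s,t)} and the derivations ∂₁, ∂₂, ∂₃ on D₀, and for scalars (u,v,w), (u',v',w'), the identity α_{r,s,t}(∂_{(u,v,w)}(F)) = ∂_{(u',v',w')}(α_{r,s,t}(F)) holds for all F if and only if u = u', v = v', and w = w' + c(v'r - su'), where ∂_{(u,v,w)} = u∂₁ + v∂₂ + w∂₃. -/

import Mathlib

open Complex Real

noncomputable def heisAct (c : ℤ) (g : ℝ × ℝ × ℝ) (F : ℤ → ℝ → ℝ → ℂ) :
    ℤ → ℝ → ℝ → ℂ :=
  fun p x y =>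
    Complex.exp (2 * π * I * p * (g.2.2 + c * g.2.1 * (x - g.1))) * F p (x - g.1) (y - g.2.1)

/-- `∂_{(u,v,w)} = u∂₁ + v∂₂ + w∂₃`. -/
noncomputable def delComb (c : ℤ) (u v w : ℂ) (F : ℤ → ℝ → ℝ → ℂ) : ℤ → ℝ → ℝ → ℂ :=
  fun p x y =>
    u * (-deriv (fun x' => F p x' y) x) +
    v * (-deriv (fun y' => F p x y') y + (2 * π * I * p * c * x) * F p x y) +
    w * ((2 * π * I * p) * F p x y)

def InD0 (c : ℤ) (ν : ℝ) (F : ℤ → ℝ → ℝ → ℂ) : Prop :=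
  (Function.support F).Finite ∧
  (∀ p, ContDiff ℝ (⊤ : ℕ∞) (fun q : ℝ × ℝ => F p q.1 q.2)) ∧
  (∀ p x y, F p (x + 1) y = Complex.exp (-2 * π * I * c * p * (y - p * ν)) * F p x y) ∧
  (∀ p x y, F p x (y + 1) = F p x y)

/-! ### Auxiliary material -/

lemma stmt11_backward (c : ℤ) (ν : ℝ) (r s t : ℝ) (u' v' w' : ℂ)
    (F : ℤ → ℝ → ℝ → ℂ) (hF : InD0 c ν F) (p : ℤ) (x y : ℝ) :
    heisAct c (r, s, t) (delComb c u' v' (w' + c * (v' * r - s * u')) F) p x y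
      = delComb c u' v' w' (heisAct c (r, s, t) F) p x y := by
  obtain ⟨-, hsm, -, -⟩ := hF
  have hdiff := (hsm p).differentiable (by simp)
  have hdx : ∀ a b : ℝ, DifferentiableAt ℝ (fun x' => F p x' b) a := by
    intro a b
    exact ((hdiff.comp (Differentiable.prodMk differentiable_id (differentiable_const b))).differentiableAt :)
  have hdy : ∀ a b : ℝ, DifferentiableAt ℝ (fun y' => F p a y') b := by
    intro a b
    exact ((hdiff.comp (Differentiable.prodMk (differentiable_const a) differentiable_id)).differentiableAt :)
  set Fx := deriv (fun x' => F p x' (y - s)) (x - r) with hFx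
  set Fy := deriv (fun y' => F p (x - r) y') (y - s) with hFy
  set A := F p (x - r) (y - s) with hA
  set E := Complex.exp (2 * π * I * p * ((t : ℂ) + (c : ℂ) * (s : ℂ) * ((x : ℂ) - (r : ℂ)))) with hE
  have hone : HasDerivAt (fun x' : ℝ => ((x' : ℂ))) 1 x := by
    simpa using (hasDerivAt_id x).ofReal_comp
  have hexp : HasDerivAt
      (fun x' : ℝ => Complex.exp (2 * π * I * p * ((t : ℂ) + (c : ℂ) * (s : ℂ) * ((x' : ℂ) - (r : ℂ)))))
      (E * (2 * π * I * p * ((c : ℂ) * (s : ℂ) * 1))) x := by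
    exact ((((hone.sub_const (r : ℂ)).const_mul ((c : ℂ) * (s : ℂ))).const_add (t : ℂ)).const_mul
      (2 * π * I * (p : ℂ))).cexp
  have hAx : HasDerivAt (fun x' : ℝ => F p (x' - r) (y - s)) Fx x :=
    HasDerivAt.comp_sub_const _ _ (hdx (x - r) (y - s)).hasDerivAt
  have hAy : HasDerivAt (fun y' : ℝ => F p (x - r) (y' - s)) Fy y :=
    HasDerivAt.comp_sub_const _ _ (hdy (x - r) (y - s)).hasDerivAt
  have d1 : deriv (fun x' : ℝ =>
        Complex.exp (2 * π * I * p * ((t:ℂ) + (c:ℂ) * (s:ℂ) * ((x':ℂ) - (r:ℂ)))) * F p (x' - r) (y - s)) x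
      = E * (2 * π * I * p * ((c : ℂ) * (s : ℂ) * 1)) * A + E * Fx :=
    (hexp.mul hAx).deriv
  have d2 : deriv (fun y' : ℝ =>
        Complex.exp (2 * π * I * p * ((t:ℂ) + (c:ℂ) * (s:ℂ) * ((x:ℂ) - (r:ℂ)))) * F p (x - r) (y' - s)) y
      = E * Fy := (hAy.const_mul E).deriv
  simp only [heisAct, delComb]
  rw [d1, d2]
  simp only [← hFx, ← hFy, ← hA, ← hE]
  push_cast
  ring

/-- First test function: supported at `p = 0`, equal to `e^{2πix}` there. -/
noncomputable def F1 : ℤ → ℝ → ℝ → ℂ :=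
  fun p x _ => if p = 0 then Complex.exp (2 * π * I * x) else 0

/-- Second test function: supported at `p = 0`, equal to `e^{2πiy}` there. -/
noncomputable def F2 : ℤ → ℝ → ℝ → ℂ :=
  fun p _ y => if p = 0 then Complex.exp (2 * π * I * y) else 0

/-- Third test function: supported at `p = 1`, a Jacobi theta-type (hence analytic) element. -/
noncomputable def F3 (c : ℤ) (ν : ℝ) : ℤ → ℝ → ℝ → ℂ :=
  fun p x y => if p = 1 then
    Complex.exp (-(π : ℂ) * (x : ℂ) ^ 2) *
      jacobiTheta₂ (-I * (x : ℂ) - (c : ℂ) * ((y : ℂ) - (ν : ℂ))) I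
  else 0

lemma cd_exp_fst : ContDiff ℝ (⊤ : ℕ∞) (fun q : ℝ × ℝ => Complex.exp (2 * π * I * (q.1 : ℂ))) := by
  apply ContDiff.cexp
  exact contDiff_const.mul (Complex.ofRealCLM.contDiff.comp contDiff_fst)

lemma cd_exp_snd : ContDiff ℝ (⊤ : ℕ∞) (fun q : ℝ × ℝ => Complex.exp (2 * π * I * (q.2 : ℂ))) := by
  apply ContDiff.cexp
  exact contDiff_const.mul (Complex.ofRealCLM.contDiff.comp contDiff_snd)

lemma hF1 (c : ℤ) (ν : ℝ) : InD0 c ν F1 := by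
  refine ⟨Set.Finite.subset (Set.finite_singleton 0) ?_, ?_, ?_, ?_⟩
  · intro p hp
    simp only [Function.mem_support] at hp
    simp only [Set.mem_singleton_iff]
    by_contra hne
    exact hp (by funext x y; simp [F1, hne])
  · intro p
    by_cases hp : p = 0
    · subst hp; simpa [F1] using cd_exp_fst
    · simp [F1, hp]; exact contDiff_const
  · intro p x y
    by_cases hp : p = 0
    · subst hp
      simp only [F1, if_pos rfl, Int.cast_zero, mul_zero, zero_mul, neg_mul, zero_sub,
        Complex.ofReal_add, Complex.ofReal_one]
      rw [show (2 * ↑π * I * ((x:ℂ) + 1)) = 2 * ↑π * I * (x:ℂ) + 2 * ↑π * I by ring]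
      simp [Complex.exp_add, Complex.exp_two_pi_mul_I]
    · simp [F1, hp]
  · intro p x y; rfl

lemma hF2 (c : ℤ) (ν : ℝ) : InD0 c ν F2 := by
  refine ⟨Set.Finite.subset (Set.finite_singleton 0) ?_, ?_, ?_, ?_⟩
  · intro p hp
    simp only [Function.mem_support] at hp
    simp only [Set.mem_singleton_iff]
    by_contra hne
    exact hp (by funext x y; simp [F2, hne])
  · intro p
    by_cases hp : p = 0
    · subst hp; simpa [F2] using cd_exp_snd
    · simp [F2, hp]; exact contDiff_const
  · intro p x y
    by_cases hp : p = 0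
    · subst hp; simp [F2]
    · simp [F2, hp]
  · intro p x y
    by_cases hp : p = 0
    · subst hp
      simp only [F2, if_pos rfl, Complex.ofReal_add, Complex.ofReal_one]
      rw [show (2 * ↑π * I * ((y:ℂ) + 1)) = 2 * ↑π * I * (y:ℂ) + 2 * ↑π * I by ring]
      simp [Complex.exp_add, Complex.exp_two_pi_mul_I]
    · simp [F2, hp]

lemma imI : (0:ℝ) < Complex.im Complex.I := by simp

lemma theta_contDiff : ContDiff ℝ (⊤ : ℕ∞) (fun z : ℂ => jacobiTheta₂ z I) := by
  apply AnalyticOnNhd.contDiff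
  apply AnalyticOnNhd.restrictScalars (𝕜' := ℂ)
  apply DifferentiableOn.analyticOnNhd _ isOpen_univ
  intro z _
  exact (differentiableAt_jacobiTheta₂_fst z imI).differentiableWithinAt

lemma F3smooth (c : ℤ) (ν : ℝ) : ContDiff ℝ (⊤ : ℕ∞) (fun q : ℝ × ℝ => F3 c ν 1 q.1 q.2) := by
  simp only [F3, if_pos rfl]
  apply ContDiff.mul
  · apply ContDiff.cexp
    apply ContDiff.mul contDiff_const
    exact (Complex.ofRealCLM.contDiff.comp contDiff_fst).pow 2
  · apply theta_contDiff.comp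
    apply ContDiff.sub
    · exact contDiff_const.mul (Complex.ofRealCLM.contDiff.comp contDiff_fst)
    · exact contDiff_const.mul ((Complex.ofRealCLM.contDiff.comp contDiff_snd).sub contDiff_const)

lemma theta_periodic : Function.Periodic (fun z : ℂ => jacobiTheta₂ z I) 1 :=
  fun z => jacobiTheta₂_add_left z I

lemma hF3 (c : ℤ) (ν : ℝ) : InD0 c ν (F3 c ν) := by
  refine ⟨Set.Finite.subset (Set.finite_singleton 1) ?_, ?_, ?_, ?_⟩
  · intro p hp
    simp only [Function.mem_support, Set.mem_singleton_iff] at hp ⊢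
    by_contra hne
    exact hp (by funext x y; simp [F3, hne])
  · intro p
    by_cases hp : p = 1
    · subst hp; exact F3smooth c ν
    · simp only [F3, if_neg hp]; exact contDiff_const
  · intro p x y
    by_cases hp : p = 1
    · subst hp
      simp only [F3, eq_self_iff_true, if_true]
      set z : ℂ := -I * (x : ℂ) - (c : ℂ) * ((y : ℂ) - (ν : ℂ)) with hz
      have harg : -I * ((x + 1 : ℝ) : ℂ) - (c : ℂ) * ((y : ℂ) - (ν : ℂ)) = (z - I) + I - I := by
        push_cast; ring
      have hshift : jacobiTheta₂ ((z - I) + I) I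
          = cexp (-(π:ℂ) * I * (I + 2 * (z - I))) * jacobiTheta₂ (z - I) I :=
        jacobiTheta₂_add_left' (z - I) I
      have h2 : jacobiTheta₂ (z - I + I - I) I = jacobiTheta₂ (z - I) I := by norm_num
      have hinv : jacobiTheta₂ (z - I) I
          = cexp ((π:ℂ) * I * (I + 2 * (z - I))) * jacobiTheta₂ z I := by
        have h3 := hshift
        rw [show z - I + I = z by ring] at h3
        rw [h3, ← mul_assoc, ← Complex.exp_add,
          show (π:ℂ) * I * (I + 2 * (z - I)) + -(π:ℂ) * I * (I + 2 * (z - I)) = 0 by ring,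
          Complex.exp_zero, one_mul]
      rw [harg, h2, hinv, ← mul_assoc, ← Complex.exp_add, ← mul_assoc, ← Complex.exp_add]
      congr 1
      congr 1
      push_cast
      linear_combination (-(π:ℂ) - 2 * (π:ℂ) * (x:ℂ)) * Complex.I_sq
    · simp [F3, hp]
  · intro p x y
    by_cases hp : p = 1
    · subst hp
      simp only [F3, eq_self_iff_true, if_true]
      congr 1
      have harg : -I * (x : ℂ) - (c : ℂ) * (((y + 1 : ℝ) : ℂ) - (ν : ℂ))
          = (-I * (x : ℂ) - (c : ℂ) * ((y : ℂ) - (ν : ℂ))) - (c : ℤ) * (1 : ℂ) := by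
        push_cast; ring
      rw [harg]
      exact theta_periodic.sub_int_mul_eq c
    · simp [F3, hp]

lemma theta_ne_zero : jacobiTheta₂ 0 I ≠ 0 := by
  have hs := hasSum_jacobiTheta₂_term 0 imI
  have hterm : ∀ n : ℤ, jacobiTheta₂_term n 0 I = ((rexp (-(π * (n:ℝ)^2)) : ℝ) : ℂ) := by
    intro n
    rw [jacobiTheta₂_term, Complex.ofReal_exp]
    congr 1
    push_cast
    linear_combination (π:ℂ) * (n:ℂ)^2 * Complex.I_sq
  rw [funext hterm] at hs
  have hre : HasSum (fun n : ℤ => rexp (-(π * (n:ℝ)^2))) (jacobiTheta₂ 0 I).re := by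
    have h4 := hs.mapL Complex.reCLM
    simp only [Complex.reCLM_apply, Complex.ofReal_re] at h4
    exact h4
  have h1 : rexp (-(π * ((0:ℤ):ℝ)^2)) ≤ (jacobiTheta₂ 0 I).re :=
    le_hasSum hre 0 (fun j _ => (Real.exp_pos _).le)
  have hpos : (0:ℝ) < (jacobiTheta₂ 0 I).re := by
    refine lt_of_lt_of_le ?_ h1
    positivity
  intro h0
  rw [h0] at hpos
  simp at hpos

lemma F3_ne_zero (c : ℤ) (ν : ℝ) : F3 c ν 1 0 ν ≠ 0 := by
  simp only [F3, eq_self_iff_true, if_true]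
  have : -I * ((0:ℝ) : ℂ) - (c : ℂ) * (((ν:ℝ) : ℂ) - (ν : ℂ)) = 0 := by push_cast; ring
  rw [this]
  simp only [Complex.ofReal_zero]
  norm_num
  exact theta_ne_zero

lemma two_pi_I_ne_zero' : (2 * (π:ℂ) * I) ≠ 0 :=
  mul_ne_zero (mul_ne_zero two_ne_zero (Complex.ofReal_ne_zero.2 Real.pi_ne_zero)) Complex.I_ne_zero

/-- `α_{r,s,t}(∂_{(u,v,w)}F) = ∂_{(u',v',w')}(α_{r,s,t}F)` holds for
all `F ∈ D₀` iff `u = u'`, `v = v'` and `w = w' + c(v'r - su')`. -/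
theorem stmt11 (c : ℤ) (ν : ℝ) (r s t : ℝ) (u v w u' v' w' : ℂ) :
    (∀ F : ℤ → ℝ → ℝ → ℂ, InD0 c ν F → ∀ p x y,
        heisAct c (r, s, t) (delComb c u v w F) p x y
          = delComb c u' v' w' (heisAct c (r, s, t) F) p x y) ↔
      (u = u' ∧ v = v' ∧ w = w' + c * (v' * r - s * u')) := by
  constructor
  · intro h
    -- Subtract the known identity to get an equality of pure `delComb`s.
    have hW : ∀ F, InD0 c ν F → ∀ p (a b : ℝ),
        delComb c u v w F p a b
          = delComb c u' v' (w' + c * (v' * r - s * u')) F p a b := by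
      intro F hF p a b
      have key := (h F hF p (a + r) (b + s)).trans
        (stmt11_backward c ν r s t u' v' w' F hF p (a + r) (b + s)).symm
      simp only [heisAct] at key
      rw [show a + r - r = a by ring, show b + s - s = b by ring] at key
      exact mul_left_cancel₀ (Complex.exp_ne_zero _) key
    -- derivative computations for F1 and F2 at the test point
    have hone : HasDerivAt (fun x' : ℝ => ((x' : ℂ))) 1 (0:ℝ) := by
      simpa using (hasDerivAt_id (0:ℝ)).ofReal_comp
    have hder : deriv (fun x' : ℝ => Complex.exp (2 * π * I * (x' : ℂ))) (0:ℝ) = 2 * π * I := by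
      have h5 := ((hone.const_mul (2 * (π:ℂ) * I)).cexp).deriv
      simpa using h5
    have n1 : deriv (fun x' : ℝ => F1 0 x' 0) 0 = 2 * π * I := by
      have hfun : (fun x' : ℝ => F1 0 x' 0) = fun x' : ℝ => Complex.exp (2 * π * I * (x' : ℂ)) := by
        funext x'; simp [F1]
      rw [hfun, hder]
    have n2 : deriv (fun y' : ℝ => F1 0 0 y') 0 = 0 := by
      have hfun : (fun y' : ℝ => F1 0 0 y') = fun _ : ℝ => (1:ℂ) := by
        funext y'; simp [F1]
      rw [hfun, deriv_const]
    have n3 : deriv (fun x' : ℝ => F2 0 x' 0) 0 = 0 := by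
      have hfun : (fun x' : ℝ => F2 0 x' 0) = fun _ : ℝ => (1:ℂ) := by
        funext x'; simp [F2]
      rw [hfun, deriv_const]
    have n4 : deriv (fun y' : ℝ => F2 0 0 y') 0 = 2 * π * I := by
      have hfun : (fun y' : ℝ => F2 0 0 y') = fun y' : ℝ => Complex.exp (2 * π * I * (y' : ℂ)) := by
        funext y'; simp [F2]
      rw [hfun, hder]
    have hu : u = u' := by
      have k1 := hW F1 (hF1 c ν) 0 0 0
      simp only [delComb] at k1
      rw [n1, n2] at k1
      apply mul_left_cancel₀ two_pi_I_ne_zero'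
      linear_combination (norm := (push_cast; ring1)) -k1
    have hv : v = v' := by
      have k2 := hW F2 (hF2 c ν) 0 0 0
      simp only [delComb] at k2
      rw [n3, n4] at k2
      apply mul_left_cancel₀ two_pi_I_ne_zero'
      linear_combination (norm := (push_cast; ring1)) -k2
    refine ⟨hu, hv, ?_⟩
    have k3 := hW (F3 c ν) (hF3 c ν) 1 0 ν
    simp only [delComb] at k3
    rw [hu, hv] at k3
    apply mul_left_cancel₀ (mul_ne_zero two_pi_I_ne_zero' (F3_ne_zero c ν))
    linear_combination (norm := (push_cast; ring1)) k3
  · rintro ⟨rfl, rfl, rfl⟩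
    intro F hF p x y
    exact stmt11_backward c ν r s t _ _ _ F hF p x y
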